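/- The function g(x) = (e^x(x+1) + x - 1)/(2x) is strictly increasing on (0, ∞). -/

import Mathlib

open Real Set

/- Writing `g x = ((exp x + 1) + (exp x - 1) / x) / 2`, the first summand is increasing, and
`(exp x - 1) / x` is the slope of the strictly convex function `exp` between `0` and `x`,
which increases strictly with `x`. -/

theorem strictMonoOn_exp_sub_one_div : StrictMonoOn (fun x : ℝ => (exp x - 1) / x) {0}ᶜ := by
  intro x hx y hy hxy
  simpa using strictConvexOn_exp.secant_strict_mono (mem_univ 0) (mem_univ x) (mem_univ y) hx hy hxy

theorem exp_mul_add_one_add_sub_one_div_two_mul {x : ℝ} (hx : x ≠ 0) :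
    (exp x * (x + 1) + x - 1) / (2 * x) = ((exp x + 1) + (exp x - 1) / x) / 2 := by
  field_simp
  ring

theorem NB_strictMono :
    StrictMonoOn (fun x : ℝ => (Real.exp x * (x + 1) + x - 1) / (2 * x)) (Set.Ioi 0) := by
  intro x hx y hy hxy
  have hexp : exp x < exp y := exp_lt_exp.mpr hxy
  have hslope : (exp x - 1) / x < (exp y - 1) / y :=
    strictMonoOn_exp_sub_one_div (ne_of_gt hx) (ne_of_gt hy) hxy
  simp only [exp_mul_add_one_add_sub_one_div_two_mul (ne_of_gt hx),
    exp_mul_add_one_add_sub_one_div_two_mul (ne_of_gt hy)]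
  linarith
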